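/- arXiv:2402.05510 — 2 statements merged into one kernel-verified Lean document; each statement's English description precedes it below -/
import Mathlib

section
/- Let ε be irrational, n a positive integer, and let (i₁,…,i_m,k₁), (j₁,…,j_m,k₂) be tuples of nonnegative integers with k₁, k₂ < n. Suppose there exist nonnegative integers A₁,…,A_m and a real number B > 0 such that both points P₁ = (i₁/(n-k₁+ε),…,i_m/(n-k₁+ε)) and P₂ = (j₁/(n-k₂+ε),…,j_m/(n-k₂+ε)) lie on the hyperplane A₁x₁+⋯+A_mx_m = B. Then k₁ = k₂. -/
/-- two perturbed projections on a common rational hyperplane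
come from monomials with the same Z-exponent. -/
theorem stmt3 (m n : ℕ) (hn : 0 < n) (ε : ℝ) (hε : Irrational ε)
    (i j : Fin m → ℕ) (k₁ k₂ : ℕ) (hk₁ : k₁ < n) (hk₂ : k₂ < n)
    (A : Fin m → ℕ) (B : ℝ) (hB : 0 < B)
    (h₁ : ∑ l, (A l : ℝ) * ((i l : ℝ) / ((n : ℝ) - k₁ + ε)) = B)
    (h₂ : ∑ l, (A l : ℝ) * ((j l : ℝ) / ((n : ℝ) - k₂ + ε)) = B) :
    k₁ = k₂ := by
  set d₁ : ℝ := (n : ℝ) - k₁ + ε with hd₁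
  set d₂ : ℝ := (n : ℝ) - k₂ + ε with hd₂
  have hd₁ne : d₁ ≠ 0 := by
    intro h
    have : ε = ((k₁ : ℝ) - n) := by linarith [h]
    exact hε ⟨(k₁ : ℚ) - n, by push_cast [this]; ring⟩
  have hd₂ne : d₂ ≠ 0 := by
    intro h
    have : ε = ((k₂ : ℝ) - n) := by linarith [h]
    exact hε ⟨(k₂ : ℚ) - n, by push_cast [this]; ring⟩
  set S₁ : ℕ := ∑ l, A l * i l with hS₁
  set S₂ : ℕ := ∑ l, A l * j l with hS₂
  have e₁ : (S₁ : ℝ) = B * d₁ := by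
    have : ∑ l, (A l : ℝ) * ((i l : ℝ) / d₁) = (S₁ : ℝ) / d₁ := by
      rw [hS₁]; push_cast
      rw [Finset.sum_div]
      refine Finset.sum_congr rfl fun l _ => by ring
    rw [this] at h₁
    field_simp at h₁
    linarith [h₁]
  have e₂ : (S₂ : ℝ) = B * d₂ := by
    have : ∑ l, (A l : ℝ) * ((j l : ℝ) / d₂) = (S₂ : ℝ) / d₂ := by
      rw [hS₂]; push_cast
      rw [Finset.sum_div]
      refine Finset.sum_congr rfl fun l _ => by ring
    rw [this] at h₂
    field_simp at h₂
    linarith [h₂]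
  by_contra hne
  have hkk : (k₂ : ℝ) - k₁ ≠ 0 := by
    intro h
    have h' : (k₂ : ℝ) = k₁ := sub_eq_zero.mp h
    exact hne (by exact_mod_cast h'.symm)
  have hdiff : (S₁ : ℝ) - S₂ = B * ((k₂ : ℝ) - k₁) := by
    rw [e₁, e₂, hd₁, hd₂]; ring
  have hSne : (S₁ : ℝ) - S₂ ≠ 0 := by
    intro h
    rw [h] at hdiff
    rcases mul_eq_zero.mp hdiff.symm with h' | h'
    · linarith
    · exact hkk h'
  have hBval : B = ((S₁ : ℝ) - S₂) / ((k₂ : ℝ) - k₁) := by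
    field_simp
    linarith [hdiff]
  have hεval : ε = (S₁ : ℝ) * ((k₂ : ℝ) - k₁) / ((S₁ : ℝ) - S₂) - n + k₁ := by
    have hBne : B ≠ 0 := ne_of_gt hB
    have : d₁ = (S₁ : ℝ) / B := by rw [e₁]; field_simp
    rw [hd₁] at this
    rw [hBval] at this
    have h2 : (S₁ : ℝ) / (((S₁ : ℝ) - S₂) / ((k₂ : ℝ) - k₁))
        = (S₁ : ℝ) * ((k₂ : ℝ) - k₁) / ((S₁ : ℝ) - S₂) := by
      field_simp
    rw [h2] at this
    linarith [this]
  apply hε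
  refine ⟨(S₁ : ℚ) * ((k₂ : ℚ) - k₁) / ((S₁ : ℚ) - S₂) - n + k₁, ?_⟩
  rw [hεval]
  push_cast
  ring
end

section
/- Let ε be irrational, n ≥ 1, and let P₀,…,P_m ∈ ℝ^m be points of the form P_l = (i₁^{(l)}/(n-k^{(l)}+ε), …, i_m^{(l)}/(n-k^{(l)}+ε)) with i_j^{(l)}, k^{(l)} nonnegative integers and k^{(l)} < n. Suppose the m+1 points P₀,…,P_m lie on a common affine hyperplane of ℝ^m. Then the (m+1)×(m+1) integer matrices with rows (n-k^{(l)}, i₁^{(l)},…,i_m^{(l)}) and with rows (1, i₁^{(l)},…,i_m^{(l)}) both have determinant zero. -/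
/-!
Clearing denominators, the hyperplane `∑ A s * x s = B` puts the nonzero vector `(-B, A)` in the
kernel of the real matrix with rows `(n - k_l + ε, i_l)`, so its determinant vanishes. That
determinant is linear in the first column, hence equals `det N₁ + ε * det N₂` for the two integer
matrices of the statement, and irrationality of `ε` forces both integer determinants to vanish.
-/

open Matrix

theorem Irrational.eq_zero_of_intCast_add_mul_intCast_eq_zero {ε : ℝ} (hε : Irrational ε)
    {a b : ℤ} (h : (a : ℝ) + ε * b = 0) : a = 0 ∧ b = 0 := by
  have hb : b = 0 := by
    by_contra hb
    exact ((hε.mul_intCast hb).intCast_add a).ne_zero h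
  subst hb
  simpa using h

theorem Matrix.det_of_finCons_add_mul {R : Type*} [CommRing R] {m : ℕ}
    (a b : Fin (m + 1) → R) (c : R) (v : Fin (m + 1) → Fin m → R) :
    det (of fun l => Fin.cons (a l + c * b l) (v l) : Matrix (Fin (m + 1)) (Fin (m + 1)) R) =
      det (of fun l => Fin.cons (a l) (v l) : Matrix (Fin (m + 1)) (Fin (m + 1)) R) +
        c * det (of fun l => Fin.cons (b l) (v l) : Matrix (Fin (m + 1)) (Fin (m + 1)) R) := by
  simp only [det_succ_column_zero, of_apply, Fin.cons_zero, submatrix, Fin.cons_succ,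
    Finset.mul_sum, ← Finset.sum_add_distrib]
  exact Finset.sum_congr rfl fun l _ => by ring

theorem Matrix.det_of_finCons_eq_zero_of_forall_sum_mul_eq {K : Type*} [Field K] {m : ℕ}
    (d : Fin (m + 1) → K) (x : Fin (m + 1) → Fin m → K) {A : Fin m → K} (B : K) (hA : A ≠ 0)
    (h : ∀ l, ∑ s, A s * x l s = B * d l) :
    det (of fun l => Fin.cons (d l) (x l) : Matrix (Fin (m + 1)) (Fin (m + 1)) K) = 0 := by
  rw [← exists_mulVec_eq_zero_iff]
  refine ⟨Fin.cons (-B) A, fun h0 => hA (funext fun s => by simpa using congrFun h0 s.succ), ?_⟩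
  funext l
  simp only [mulVec, dotProduct, of_apply, Fin.sum_univ_succ, Fin.cons_zero, Fin.cons_succ,
    Pi.zero_apply, mul_comm (x l _), h]
  ring

theorem Matrix.map_of_finCons {R S : Type*} {m n : ℕ} (f : R → S) (a : Fin n → R)
    (v : Fin n → Fin m → R) :
    (of fun l => Fin.cons (a l) (v l) : Matrix (Fin n) (Fin (m + 1)) R).map f =
      of fun l => Fin.cons (f (a l)) (fun s => f (v l s)) := by
  ext l j
  cases j using Fin.cases <;> simp

theorem stmt13_general (m n : ℕ) (ε : ℝ) (hε : Irrational ε)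
    (i : Fin (m + 1) → Fin m → ℕ) (k : Fin (m + 1) → ℕ)
    (A : Fin m → ℝ) (B : ℝ) (hA : A ≠ 0)
    (hplane : ∀ l, ∑ s, A s * ((i l s : ℝ) / ((n : ℝ) - k l + ε)) = B) :
    Matrix.det
      (Matrix.of (fun l => Fin.cons ((n : ℤ) - (k l : ℤ)) (fun s => (i l s : ℤ))) :
        Matrix (Fin (m + 1)) (Fin (m + 1)) ℤ) = 0 ∧
    Matrix.det
      (Matrix.of (fun l => Fin.cons (1 : ℤ) (fun s => (i l s : ℤ))) :
        Matrix (Fin (m + 1)) (Fin (m + 1)) ℤ) = 0 := by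
  have hden (l) : (n : ℝ) - k l + ε ≠ 0 := by
    simpa using (hε.intCast_add ((n : ℤ) - k l)).ne_zero
  have hperturbed := det_of_finCons_eq_zero_of_forall_sum_mul_eq
    (fun l => (n : ℝ) - k l + ε * 1) (fun l s => (i l s : ℝ)) B hA fun l => by
      rw [mul_one, ← hplane l, Finset.sum_mul]
      exact Finset.sum_congr rfl fun s _ => by field_simp [hden l]
  rw [det_of_finCons_add_mul] at hperturbed
  refine hε.eq_zero_of_intCast_add_mul_intCast_eq_zero ?_
  simpa [Int.cast_det, map_of_finCons] using hperturbed

/-- if m+1 perturbed projections lie on a common affine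
hyperplane, then both associated integer determinants vanish. -/
theorem stmt13 (m n : ℕ) (hn : 1 ≤ n) (ε : ℝ) (hε : Irrational ε)
    (i : Fin (m + 1) → Fin m → ℕ) (k : Fin (m + 1) → ℕ) (hk : ∀ l, k l < n)
    (A : Fin m → ℝ) (B : ℝ) (hA : A ≠ 0)
    (hplane : ∀ l, ∑ s, A s * ((i l s : ℝ) / ((n : ℝ) - k l + ε)) = B) :
    Matrix.det
      (Matrix.of (fun l => Fin.cons ((n : ℤ) - (k l : ℤ)) (fun s => (i l s : ℤ))) :
        Matrix (Fin (m + 1)) (Fin (m + 1)) ℤ) = 0 ∧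
    Matrix.det
      (Matrix.of (fun l => Fin.cons (1 : ℤ) (fun s => (i l s : ℤ))) :
        Matrix (Fin (m + 1)) (Fin (m + 1)) ℤ) = 0 :=
  stmt13_general m n ε hε i k A B hA hplane
end
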